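/- arXiv:math/0312418 — 3 statements merged into one kernel-verified Lean document; each statement's English description precedes it below -/
import Mathlib

section
/- If n = p_1 + ... + p_k is an s-non-squashing partition of n ≥ s with largest part p_k strictly greater than (s-1)n/s, then subtracting 1 from the largest part yields an s-non-squashing partition of n-1. -/
/-- A partition written as a nondecreasing list of positive parts. -/
def IsPartList (l : List ℕ) : Prop :=
  l.Pairwise (· ≤ ·) ∧ ∀ p ∈ l, 0 < p

/-- A partition with distinct parts, written as a strictly increasing list of positive parts. -/
def DistinctPartList (l : List ℕ) : Prop :=
  l.Pairwise (· < ·) ∧ ∀ p ∈ l, 0 < p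

/-- The s-non-squashing condition: (s-1)(p₁+⋯+p_j) ≤ p_{j+1} for 1 ≤ j ≤ k-1. -/
def NSq (s : ℕ) (l : List ℕ) : Prop :=
  ∀ j, 0 < j → j < l.length → (s - 1) * (l.take j).sum ≤ l.getD j 0

/-!
Write the partition as `L ++ [M]`. The hypothesis on the largest part rearranges to
`(s - 1) * L.sum < M`, i.e. the non-squashing inequality for `M` holds with room to spare, so it
survives replacing `M` by `M - 1`. The same inequality makes every part of `L` smaller than `M`,
so the parts stay nondecreasing, and `s ≤ n` forces `M ≥ 2`, so the new last part is positive.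
-/

theorem isPartList_append_singleton {L : List ℕ} {a : ℕ} :
    IsPartList (L ++ [a]) ↔ IsPartList L ∧ (∀ p ∈ L, p ≤ a) ∧ 0 < a := by
  simp only [IsPartList, List.pairwise_append, List.pairwise_singleton, List.mem_append,
    List.mem_singleton, true_and, forall_eq, or_imp, forall_and]
  tauto

theorem nsq_append_singleton {s a : ℕ} {L : List ℕ} :
    NSq s (L ++ [a]) ↔ NSq s L ∧ (s - 1) * L.sum ≤ a := by
  have htake : ∀ j ≤ L.length, (L ++ [a]).take j = L.take j := fun j hj =>
    List.take_append_of_le_length hj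
  have hget : ∀ j < L.length, (L ++ [a]).getD j 0 = L.getD j 0 := fun j hj =>
    List.getD_append _ _ _ _ hj
  have hlast : (L ++ [a]).getD L.length 0 = a := by simp
  simp only [NSq, List.length_append, List.length_singleton]
  constructor
  · intro h
    refine ⟨fun j hj hjL => ?_, ?_⟩
    · rw [← htake j hjL.le, ← hget j hjL]
      exact h j hj (by omega)
    · rcases Nat.eq_zero_or_pos L.length with hL | hL
      · simp [List.eq_nil_of_length_eq_zero hL]
      · simpa [htake _ le_rfl, hlast] using h L.length hL (by omega)
  · rintro ⟨h, hlastSum⟩ j hj hjL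
    rcases Nat.lt_or_ge j L.length with hjL' | hjL'
    · rw [htake j hjL'.le, hget j hjL']
      exact h j hj hjL'
    · obtain rfl : j = L.length := by omega
      simpa [htake _ le_rfl, hlast] using hlastSum

theorem stmt_3 (s n : ℕ) (hs : 2 ≤ s) (hn : s ≤ n) (l : List ℕ)
    (hl : IsPartList l) (hns : NSq s l) (hsum : l.sum = n) (hne : l ≠ [])
    (hbig : (s - 1) * n < s * l.getLast hne) :
    IsPartList (l.dropLast ++ [l.getLast hne - 1]) ∧
    NSq s (l.dropLast ++ [l.getLast hne - 1]) ∧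
    (l.dropLast ++ [l.getLast hne - 1]).sum = n - 1 := by
  set L := l.dropLast
  set M := l.getLast hne
  have hl_eq : l = L ++ [M] := (List.dropLast_append_getLast hne).symm
  rw [hl_eq] at hl hns hsum
  obtain ⟨hL, -, -⟩ := isPartList_append_singleton.1 hl
  obtain ⟨hnsL, -⟩ := nsq_append_singleton.1 hns
  rw [List.sum_append, List.sum_singleton] at hsum
  have hgap : (s - 1) * L.sum < M := by
    zify [show 1 ≤ s by omega] at hbig ⊢
    push_cast [← hsum] at hbig
    linarith
  have hM : 1 < M := Nat.lt_of_mul_lt_mul_left <|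
    calc s * 1 ≤ (s - 1) * s := by rw [mul_comm]; exact Nat.mul_le_mul_right s (by omega)
      _ ≤ (s - 1) * n := Nat.mul_le_mul_left _ hn
      _ < s * M := hbig
  have hlt : ∀ p ∈ L, p < M := fun p hp =>
    calc p ≤ L.sum := List.le_sum_of_mem hp
      _ ≤ (s - 1) * L.sum := Nat.le_mul_of_pos_left _ (by omega)
      _ < M := hgap
  refine ⟨isPartList_append_singleton.2
      ⟨hL, fun p hp => Nat.le_sub_one_of_lt (hlt p hp), by omega⟩,
    nsq_append_singleton.2 ⟨hnsL, by omega⟩, by simp; omega⟩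
end

section
/- The generating function B(x) = Σ_{n≥0} b(n) x^n of non-squashing partitions into distinct parts satisfies the functional equation B(x) = B(x^2)/(1-x) - x^2/(1-x^2) as formal power series. -/
/-- Number of non-squashing partitions of n into distinct parts. -/
noncomputable def b (n : ℕ) : ℕ :=
  {l : List ℕ | DistinctPartList l ∧ NSq 2 l ∧ l.sum = n}.ncard

/-!
Deleting the largest part `x` of a non-squashing partition of `n ≥ 1` into distinct parts leaves
one of sum `s = n - x ≤ n / 2`, and conversely every such partition extends by the part `n - s`,
the single exception being `[n / 2]` for even `n`. Hence
`∑_{m ≤ n/2} b(m) = b(n) + [n even, n ≥ 2]`, which is the coefficient identity of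
`B(x) + x² / (1 - x²) = B(x²) / (1 - x)`.
-/

theorem List.eq_singleton_of_mem_of_sum_eq {l : List ℕ} {p : ℕ} (hpos : ∀ q ∈ l, 0 < q)
    (hp : p ∈ l) (hsum : l.sum = p) : l = [p] := by
  have hperm := List.perm_cons_erase hp
  have hrest : (l.erase p).sum = 0 := by
    have := hperm.sum_eq
    simp only [List.sum_cons] at this
    omega
  have hnil : l.erase p = [] :=
    List.eq_nil_iff_forall_not_mem.2 fun q hq =>
      (hpos q (List.mem_of_mem_erase hq)).ne' (List.sum_eq_zero_iff.1 hrest q hq)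
  simpa [hnil] using hperm

namespace NonSquashing

theorem distinctPartList_append_singleton {l : List ℕ} {x : ℕ} :
    DistinctPartList (l ++ [x]) ↔ DistinctPartList l ∧ 0 < x ∧ ∀ p ∈ l, p < x := by
  simp only [DistinctPartList, List.pairwise_append, List.pairwise_singleton, List.mem_append,
    List.mem_singleton, true_and, forall_eq, or_imp, forall_and]
  tauto

theorem nSq_append_singleton (s : ℕ) {l : List ℕ} {x : ℕ} :
    NSq s (l ++ [x]) ↔ NSq s l ∧ (s - 1) * l.sum ≤ x := by
  have htake {j : ℕ} (hj : j ≤ l.length) : (l ++ [x]).take j = l.take j :=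
    List.take_append_of_le_length hj
  have hget {j : ℕ} (hj : j < l.length) : (l ++ [x]).getD j 0 = l.getD j 0 := by
    simp [List.getD_eq_getElem?_getD, List.getElem?_append_left hj]
  have hlast : (s - 1) * ((l ++ [x]).take l.length).sum ≤ (l ++ [x]).getD l.length 0 ↔
      (s - 1) * l.sum ≤ x := by
    simp [htake le_rfl]
  simp only [NSq, List.length_append, List.length_singleton]
  constructor
  · intro h
    refine ⟨fun j hj hjl => ?_, ?_⟩
    · rw [← htake hjl.le, ← hget hjl]
      exact h j hj (by omega)
    · rcases Nat.eq_zero_or_pos l.length with hl | hl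
      · simp [List.length_eq_zero_iff.1 hl]
      · exact hlast.1 (h _ hl (by omega))
  · rintro ⟨h, hx⟩ j hj hjl
    rcases Nat.lt_or_ge j l.length with hjl' | hjl'
    · rw [htake hjl'.le, hget hjl']
      exact h j hj hjl'
    · obtain rfl : j = l.length := by omega
      exact hlast.2 hx

def parts (n : ℕ) : Set (List ℕ) := {l | DistinctPartList l ∧ NSq 2 l ∧ l.sum = n}

def partsLE (k : ℕ) : Set (List ℕ) := {l | DistinctPartList l ∧ NSq 2 l ∧ l.sum ≤ k}

theorem b_eq_ncard_parts (n : ℕ) : b n = (parts n).ncard := rfl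

theorem finite_partsLE (k : ℕ) : (partsLE k).Finite := by
  refine (((Finset.range (k + 1)).powerset.finite_toSet).image fun s => s.sort).subset ?_
  rintro l ⟨⟨hinc, -⟩, -, hsum⟩
  refine ⟨l.toFinset, ?_, (List.toFinset_sort _ hinc.nodup).2 (hinc.imp le_of_lt)⟩
  simp only [Finset.coe_powerset, Set.mem_preimage, Set.mem_powerset_iff, Finset.coe_subset]
  intro p hp
  have := List.le_sum_of_mem (List.mem_toFinset.1 hp)
  simp only [Finset.mem_range]
  omega

/-- The excluded list `[n - n / 2]` has sum at most `n / 2` only for even `n`, and then its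
extension `[n / 2, n / 2]` repeats a part. -/
theorem parts_eq_image {n : ℕ} (hn : n ≠ 0) :
    parts n = (fun l => l ++ [n - l.sum]) '' (partsLE (n / 2) \ {[n - n / 2]}) := by
  ext l
  constructor
  · rintro ⟨hdist, hnsq, hsum⟩
    obtain rfl | ⟨l', x, rfl⟩ := l.eq_nil_or_concat
    · exact absurd hsum.symm hn
    rw [List.concat_eq_append] at *
    obtain ⟨hdist', hx, hlt⟩ := distinctPartList_append_singleton.1 hdist
    obtain ⟨hnsq', hle⟩ := (nSq_append_singleton 2).1 hnsq
    simp only [List.sum_append, List.sum_singleton] at hsum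
    refine ⟨l', ⟨⟨hdist', hnsq', by omega⟩, ?_⟩, by rw [← hsum]; simp only [add_tsub_cancel_left]⟩
    rintro rfl
    simp only [List.mem_singleton, forall_eq, List.sum_singleton] at hlt hsum
    omega
  · rintro ⟨l', ⟨⟨hdist', hnsq', hle⟩, hne⟩, rfl⟩
    set x := n - l'.sum
    have hlt : ∀ p ∈ l', p < x := by
      intro p hp
      have hp_le := List.le_sum_of_mem hp
      by_contra! hxp
      have hsingle : l' = [p] := List.eq_singleton_of_mem_of_sum_eq hdist'.2 hp (by omega)
      exact hne (hsingle.trans (by congr 1; omega))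
    refine ⟨distinctPartList_append_singleton.2 ⟨hdist', by omega, hlt⟩,
      (nSq_append_singleton 2).2 ⟨hnsq', by omega⟩, by rw [List.sum_append, List.sum_singleton]; omega⟩

theorem singleton_mem_partsLE_iff {m k : ℕ} : [m] ∈ partsLE k ↔ 0 < m ∧ m ≤ k := by
  simp only [partsLE, DistinctPartList, NSq, List.pairwise_singleton, List.mem_singleton,
    forall_eq, List.length_singleton, List.sum_singleton, Set.mem_ofPred_eq, true_and]
  constructor
  · exact fun h => ⟨h.1, h.2.2⟩
  · exact fun h => ⟨h.1, fun j hj hj1 => by omega, h.2⟩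

theorem ncard_partsLE (k : ℕ) : (partsLE k).ncard = ∑ m ∈ Finset.range (k + 1), b m := by
  induction k with
  | zero =>
    simp only [zero_add, Finset.sum_range_one, b_eq_ncard_parts, partsLE, parts, Nat.le_zero]
  | succ k ih =>
    have hsplit : partsLE (k + 1) = partsLE k ∪ parts (k + 1) := by
      ext l
      simp only [partsLE, parts, Set.mem_union, Set.mem_ofPred_eq, Nat.le_succ_iff]
      tauto
    have hdisj : Disjoint (partsLE k) (parts (k + 1)) :=
      Set.disjoint_left.2 fun l hl hl' => by have := hl.2.2; have := hl'.2.2; omega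
    rw [hsplit, Set.ncard_union_eq hdisj (finite_partsLE k) ((finite_partsLE (k + 1)).subset
      fun l hl => ⟨hl.1, hl.2.1, hl.2.2.le⟩), ih, Finset.sum_range_succ _ (k + 1)]
    rfl

theorem sum_range_b_half (n : ℕ) :
    ∑ m ∈ Finset.range (n / 2 + 1), b m = b n + if Even n ∧ 2 ≤ n then 1 else 0 := by
  obtain rfl | hn := eq_or_ne n 0
  · simp
  have hinj : Set.InjOn (fun l => l ++ [n - l.sum]) (partsLE (n / 2) \ {[n - n / 2]}) :=
    fun l₁ _ l₂ _ h => by simpa using congrArg List.dropLast h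
  rw [← ncard_partsLE, b_eq_ncard_parts, parts_eq_image hn, hinj.ncard_image]
  have hmem_iff : [n - n / 2] ∈ partsLE (n / 2) ↔ Even n ∧ 2 ≤ n := by
    rw [singleton_mem_partsLE_iff, Nat.even_iff]
    omega
  split_ifs with hcond
  · rw [Set.ncard_sdiff_singleton_add_one (hmem_iff.2 hcond) (finite_partsLE _)]
  · rw [Set.sdiff_singleton_eq_self (mt hmem_iff.1 hcond), add_zero]

end NonSquashing

theorem Finset.sum_range_succ_ite_even {M : Type*} [AddCommMonoid M] (f : ℕ → M) (n : ℕ) :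
    ∑ i ∈ Finset.range (n + 1), (if Even i then f (i / 2) else 0) =
      ∑ m ∈ Finset.range (n / 2 + 1), f m := by
  induction n with
  | zero => simp
  | succ n ih =>
    rw [Finset.sum_range_succ, ih]
    rcases Nat.even_or_odd (n + 1) with heven | hodd
    · have hdiv : (n + 1) / 2 = n / 2 + 1 := by rw [Nat.even_iff] at heven; omega
      rw [if_pos heven, hdiv, Finset.sum_range_succ _ (n / 2 + 1)]
    · have hdiv : (n + 1) / 2 = n / 2 := by rw [Nat.odd_iff] at hodd; omega
      rw [if_neg (Nat.not_even_iff_odd.2 hodd), hdiv, add_zero]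

namespace PowerSeries

variable {k : Type*} [Field k]

theorem inv_one_sub_X : ((1 : k⟦X⟧) - X)⁻¹ = mk 1 :=
  (inv_eq_iff_mul_eq_one (by simp)).2 (mk_one_mul_one_sub_eq_one k)

theorem coeff_inv_one_sub_X_mul (φ : k⟦X⟧) (n : ℕ) :
    coeff n ((1 - X)⁻¹ * φ) = ∑ i ∈ Finset.range (n + 1), coeff i φ := by
  rw [inv_one_sub_X, mul_comm, coeff_mul, Finset.Nat.sum_antidiagonal_eq_sum_range_succ_mk]
  simp

theorem X_sq_mul_inv_one_sub_X_sq :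
    (X ^ 2 * (1 - X ^ 2)⁻¹ : k⟦X⟧) = mk fun n => if Even n ∧ 2 ≤ n then 1 else 0 := by
  rw [eq_comm, eq_mul_inv_iff_mul_eq (by simp)]
  ext n
  simp only [mul_sub, mul_one, map_sub, coeff_mul_X_pow', coeff_X_pow, coeff_mk, Nat.even_iff]
  split_ifs <;> first | omega | simp

end PowerSeries

open PowerSeries in
theorem stmt_6 :
    (PowerSeries.mk fun n => (b n : ℚ)) =
      (1 - X)⁻¹ * (PowerSeries.mk fun n => if Even n then (b (n / 2) : ℚ) else 0)
        - X ^ 2 * (1 - X ^ 2)⁻¹ := by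
  ext n
  rw [map_sub, coeff_inv_one_sub_X_mul, X_sq_mul_inv_one_sub_X_sq]
  simp only [coeff_mk]
  rw [Finset.sum_range_succ_ite_even (fun m => (b m : ℚ)), ← Nat.cast_sum,
    NonSquashing.sum_range_b_half]
  push_cast
  ring
end

section
/- For all m ≥ 0, b(8m+2) is odd and b(8m+6) is even, where b(n) is the number of non-squashing partitions of n into distinct parts. -/
/-!
Writing a non-squashing partition as `t ++ [a]` with largest part `a`, the conditions on `a`
reduce to `t.sum ≤ a` and `t ≠ [a]`, so increasing `a` by one maps the partitions of `n`
injectively to partitions of `n + 1`. Among the partitions of `2m + 1` (`m ≥ 1`) it misses only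
`[m, m+1]`, and among those of `2m + 2` exactly the ones with largest part `m + 1`; hence
`b (2m+1) = b (2m) + 1` and `b (2m+2) + 1 = b (2m+1) + b (m+1)`. Chaining these,
`b (4n+6) = b (4n+2) + 2 b (2n+2) + 1`, so `b (4n+2) ≡ n + 1 (mod 2)`.
-/

namespace List

lemma eq_nil_of_sum_eq_zero_of_pos {l : List ℕ} (hpos : ∀ p ∈ l, 0 < p) (h : l.sum = 0) :
    l = [] :=
  eq_nil_iff_forall_not_mem.2 fun p hp => (hpos p hp).ne' (sum_eq_zero_iff.1 h p hp)

lemma eq_singleton_of_mem_of_sum_eq_s8 {l : List ℕ} {x : ℕ} (hpos : ∀ p ∈ l, 0 < p) (hx : x ∈ l)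
    (h : l.sum = x) : l = [x] := by
  obtain ⟨s, t, rfl⟩ := append_of_mem hx
  simp only [sum_append, sum_cons] at h
  have hs : s = [] :=
    eq_nil_of_sum_eq_zero_of_pos (fun p hp => hpos p (by simp [hp])) (by omega)
  have ht : t = [] :=
    eq_nil_of_sum_eq_zero_of_pos (fun p hp => hpos p (by simp [hp])) (by omega)
  simp [hs, ht]

lemma lt_of_mem_of_sum_le {l : List ℕ} {x a : ℕ} (hpos : ∀ p ∈ l, 0 < p) (hx : x ∈ l)
    (h : l.sum ≤ a) (hne : l ≠ [a]) : x < a := by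
  have hle := le_sum_of_mem hx
  refine lt_of_le_of_ne (hle.trans h) fun hxa => hne ?_
  subst hxa
  exact eq_singleton_of_mem_of_sum_eq_s8 hpos hx (le_antisymm h hle)

end List

lemma distinctPartList_append_singleton_iff {t : List ℕ} {a : ℕ} :
    DistinctPartList (t ++ [a]) ↔ DistinctPartList t ∧ (∀ x ∈ t, x < a) ∧ 0 < a := by
  simp only [DistinctPartList, List.pairwise_append, List.pairwise_singleton,
    List.mem_singleton, forall_eq, List.forall_mem_append, true_and]
  tauto

lemma nSq_append_singleton_iff {s : ℕ} {t : List ℕ} {a : ℕ} :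
    NSq s (t ++ [a]) ↔ NSq s t ∧ (s - 1) * t.sum ≤ a := by
  have htake {j : ℕ} (hj : j ≤ t.length) : (t ++ [a]).take j = t.take j := by
    simp [List.take_append, Nat.sub_eq_zero_of_le hj]
  have hget {j : ℕ} (hj : j < t.length) : (t ++ [a]).getD j 0 = t.getD j 0 := by
    simp [List.getD_eq_getElem?_getD, List.getElem?_append_left hj]
  have hlast : (t ++ [a]).getD t.length 0 = a := by
    simp [List.getD_eq_getElem?_getD]
  simp only [NSq, List.length_append, List.length_singleton]
  constructor
  · intro h
    refine ⟨fun j hj hjt => htake hjt.le ▸ hget hjt ▸ h j hj (by omega), ?_⟩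
    by_cases hne : t = []
    · simp [hne]
    · simpa [htake le_rfl, hlast] using h t.length (List.length_pos_of_ne_nil hne) (by omega)
  · rintro ⟨h, hsum⟩ j hj hjt
    rcases (Nat.lt_succ_iff.1 hjt).lt_or_eq with hjt | rfl
    · rw [htake hjt.le, hget hjt]
      exact h j hj hjt
    · rwa [htake le_rfl, List.take_length, hlast]

namespace NonSquashing

def IsNonSquashing (l : List ℕ) : Prop :=
  DistinctPartList l ∧ NSq 2 l

def partitions (n : ℕ) : Set (List ℕ) :=
  {l | IsNonSquashing l ∧ l.sum = n}

lemma b_eq_ncard_partitions (n : ℕ) : b n = (partitions n).ncard := by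
  simp only [b, partitions, IsNonSquashing, and_assoc]

lemma isNonSquashing_nil : IsNonSquashing [] :=
  ⟨⟨List.Pairwise.nil, by simp⟩, fun _ _ h => by simp at h⟩

lemma isNonSquashing_append_singleton_iff {t : List ℕ} {a : ℕ} :
    IsNonSquashing (t ++ [a]) ↔ IsNonSquashing t ∧ 0 < a ∧ t.sum ≤ a ∧ t ≠ [a] := by
  simp only [IsNonSquashing, distinctPartList_append_singleton_iff, nSq_append_singleton_iff,
    Nat.add_one_sub_one, one_mul]
  constructor
  · rintro ⟨⟨ht, hlt, ha⟩, hn, hsum⟩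
    refine ⟨⟨ht, hn⟩, ha, hsum, ?_⟩
    rintro rfl
    simp at hlt
  · rintro ⟨⟨ht, hn⟩, ha, hsum, hne⟩
    exact ⟨⟨ht, fun x hx => List.lt_of_mem_of_sum_le ht.2 hx hsum hne, ha⟩, hn, hsum⟩

lemma append_singleton_mem_partitions_iff {t : List ℕ} {a n : ℕ} :
    t ++ [a] ∈ partitions n ↔
      IsNonSquashing t ∧ 0 < a ∧ t.sum ≤ a ∧ t ≠ [a] ∧ t.sum + a = n := by
  simp [partitions, isNonSquashing_append_singleton_iff, and_assoc]

lemma exists_eq_append_singleton {l : List ℕ} {n : ℕ} (hl : l ∈ partitions n) (hn : 0 < n) :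
    ∃ t a, l = t ++ [a] := by
  rcases l.eq_nil_or_concat' with rfl | h
  · exact absurd hl.2 (by rw [List.sum_nil]; omega)
  · exact h

lemma singleton_mem_partitions {a : ℕ} (ha : 0 < a) : [a] ∈ partitions a :=
  append_singleton_mem_partitions_iff (t := []).2
    ⟨isNonSquashing_nil, ha, by simp, by simp, by simp⟩

lemma partitions_finite (n : ℕ) : (partitions n).Finite := by
  refine ((Finset.range (n + 1)).powerset.finite_toSet.image (·.sort (· ≤ ·))).subset ?_
  intro l ⟨⟨⟨hlt, _⟩, _⟩, hsum⟩
  refine ⟨l.toFinset, ?_, (List.toFinset_sort _ hlt.nodup).2 (hlt.imp le_of_lt)⟩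
  rw [Finset.mem_coe, Finset.mem_powerset]
  intro x hx
  have := List.le_sum_of_mem (List.mem_toFinset.1 hx)
  rw [Finset.mem_range]
  omega

lemma partitions_one : partitions 1 = {[1]} := by
  ext l
  simp only [Set.mem_singleton_iff]
  constructor
  · intro hl
    obtain ⟨t, a, rfl⟩ := exists_eq_append_singleton hl one_pos
    obtain ⟨ht, -, hle, -, hsum⟩ := append_singleton_mem_partitions_iff.1 hl
    rw [List.eq_nil_of_sum_eq_zero_of_pos ht.1.2 (by omega), (by omega : a = 1)]
    rfl
  · rintro rfl
    exact singleton_mem_partitions one_pos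

def bumpLast (l : List ℕ) : List ℕ :=
  l.dropLast ++ [l.getLastD 0 + 1]

@[simp]
lemma bumpLast_append_singleton (t : List ℕ) (a : ℕ) : bumpLast (t ++ [a]) = t ++ [a + 1] := by
  simp [bumpLast]

lemma bumpLast_injOn_partitions {n : ℕ} (hn : 0 < n) : (partitions n).InjOn bumpLast := by
  intro l₁ h₁ l₂ h₂ h
  obtain ⟨t₁, a₁, rfl⟩ := exists_eq_append_singleton h₁ hn
  obtain ⟨t₂, a₂, rfl⟩ := exists_eq_append_singleton h₂ hn
  simp only [bumpLast_append_singleton] at h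
  obtain ⟨rfl, h⟩ := List.append_inj' h rfl
  simp_all

lemma append_singleton_succ_mem_partitions {t : List ℕ} {a n : ℕ}
    (h : t ++ [a] ∈ partitions n) : t ++ [a + 1] ∈ partitions (n + 1) := by
  obtain ⟨ht, -, hle, -, hsum⟩ := append_singleton_mem_partitions_iff.1 h
  refine append_singleton_mem_partitions_iff.2 ⟨ht, by omega, by omega, ?_, by omega⟩
  rintro rfl
  simp at hle

lemma bumpLast_image_partitions_two_mul {m : ℕ} (hm : 0 < m) :
    bumpLast '' partitions (2 * m) = partitions (2 * m + 1) \ {[m, m + 1]} := by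
  ext l
  constructor
  · rintro ⟨l, hl, rfl⟩
    obtain ⟨t, a, rfl⟩ := exists_eq_append_singleton hl (by omega)
    obtain ⟨-, -, -, hne, -⟩ := append_singleton_mem_partitions_iff.1 hl
    refine ⟨by simpa using append_singleton_succ_mem_partitions hl, fun h => hne ?_⟩
    obtain ⟨rfl, h⟩ := List.append_inj' (by simpa using h : t ++ [a + 1] = [m] ++ [m + 1]) rfl
    simp_all
  · rintro ⟨hl, hne⟩
    obtain ⟨t, a, rfl⟩ := exists_eq_append_singleton hl (by omega)
    obtain ⟨ht, -, hle, -, hsum⟩ := append_singleton_mem_partitions_iff.1 hl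
    refine ⟨t ++ [a - 1], append_singleton_mem_partitions_iff.2
      ⟨ht, by omega, by omega, ?_, by omega⟩, by simp [(by omega : a - 1 + 1 = a)]⟩
    rintro rfl
    simp only [List.sum_singleton] at hsum
    exact hne (by rw [(by omega : a = m + 1)]; rfl)

/-- The largest part is at least `m + 1`: it is `≥ m + 2` on the first piece, `m + 1` on the
second. -/
lemma partitions_two_mul_add_two (m : ℕ) :
    partitions (2 * m + 2) = bumpLast '' partitions (2 * m + 1) ∪
      (· ++ [m + 1]) '' (partitions (m + 1) \ {[m + 1]}) := by
  ext l
  constructor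
  · intro hl
    obtain ⟨t, a, rfl⟩ := exists_eq_append_singleton hl (by omega)
    obtain ⟨ht, -, hle, hne, hsum⟩ := append_singleton_mem_partitions_iff.1 hl
    rcases (by omega : a = m + 1 ∨ m + 2 ≤ a) with rfl | ha
    · exact Or.inr ⟨t, ⟨⟨ht, by omega⟩, hne⟩, rfl⟩
    · refine Or.inl ⟨t ++ [a - 1], append_singleton_mem_partitions_iff.2
        ⟨ht, by omega, by omega, ?_, by omega⟩, by simp [(by omega : a - 1 + 1 = a)]⟩
      rintro rfl
      simp only [List.sum_singleton] at hsum
      omega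
  · rintro (⟨l, hl, rfl⟩ | ⟨t, ⟨⟨ht, hsum⟩, hne⟩, rfl⟩)
    · obtain ⟨t, a, rfl⟩ := exists_eq_append_singleton hl (by omega)
      simpa using append_singleton_succ_mem_partitions hl
    · exact append_singleton_mem_partitions_iff.2 ⟨ht, by omega, by omega, hne, by omega⟩

end NonSquashing

open NonSquashing

lemma b_one : b 1 = 1 := by
  rw [b_eq_ncard_partitions, partitions_one, Set.ncard_singleton]

lemma b_two_mul_add_one {m : ℕ} (hm : 0 < m) : b (2 * m + 1) = b (2 * m) + 1 := by
  have hmem : [m, m + 1] ∈ partitions (2 * m + 1) :=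
    append_singleton_mem_partitions_iff (t := [m]).2
      ⟨(singleton_mem_partitions hm).1, by omega, by simp, by simp, by rw [List.sum_singleton]; omega⟩
  rw [b_eq_ncard_partitions, b_eq_ncard_partitions, ← Set.ncard_sdiff_singleton_add_one hmem
    (partitions_finite _), ← bumpLast_image_partitions_two_mul hm,
    (bumpLast_injOn_partitions (by omega)).ncard_image]

lemma b_two_mul_add_two (m : ℕ) : b (2 * m + 2) + 1 = b (2 * m + 1) + b (m + 1) := by
  have hdisj : Disjoint (bumpLast '' partitions (2 * m + 1))
      ((· ++ [m + 1]) '' (partitions (m + 1) \ {[m + 1]})) := by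
    rw [Set.disjoint_left]
    rintro _ ⟨l, hl, rfl⟩ ⟨t, ⟨⟨-, hsum⟩, -⟩, h⟩
    obtain ⟨u, a, rfl⟩ := exists_eq_append_singleton hl (by omega)
    obtain ⟨-, -, hle, -, hsum'⟩ := append_singleton_mem_partitions_iff.1 hl
    obtain ⟨rfl, hlast⟩ := List.append_inj' (h.trans (bumpLast_append_singleton u a)) rfl
    rw [List.singleton_inj] at hlast
    omega
  have hsingle := Set.ncard_sdiff_singleton_add_one
    (singleton_mem_partitions m.succ_pos) (partitions_finite (m + 1))
  simp only [b_eq_ncard_partitions]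
  rw [partitions_two_mul_add_two, Set.ncard_union_eq hdisj
    ((partitions_finite _).image _) (((partitions_finite _).sdiff).image _),
    (bumpLast_injOn_partitions (by omega)).ncard_image,
    Set.ncard_image_of_injective _ (List.append_left_injective _), ← hsingle]
  ring

lemma b_two : b 2 = 1 := by
  have h := b_two_mul_add_two 0
  norm_num [b_one] at h
  omega

lemma b_four_mul_add_six (n : ℕ) : b (4 * n + 6) = b (4 * n + 2) + 2 * b (2 * n + 2) + 1 := by
  have h₁ := b_two_mul_add_one (m := 2 * n + 1) (by omega)
  have h₂ := b_two_mul_add_one (m := 2 * n + 2) (by omega)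
  have h₃ := b_two_mul_add_one (m := n + 1) (by omega)
  have h₄ := b_two_mul_add_two (2 * n + 1)
  have h₅ := b_two_mul_add_two (2 * n + 2)
  ring_nf at h₁ h₂ h₃ h₄ h₅ ⊢
  omega

lemma b_four_mul_add_two_mod_two (n : ℕ) : b (4 * n + 2) % 2 = (n + 1) % 2 := by
  induction n with
  | zero => simp [b_two]
  | succ n ih =>
    rw [show 4 * (n + 1) + 2 = 4 * n + 6 by ring, b_four_mul_add_six]
    omega

theorem stmt_8 (m : ℕ) : Odd (b (8 * m + 2)) ∧ Even (b (8 * m + 6)) := by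
  have h₁ := b_four_mul_add_two_mod_two (2 * m)
  have h₂ := b_four_mul_add_two_mod_two (2 * m + 1)
  rw [Nat.odd_iff, Nat.even_iff]
  ring_nf at h₁ h₂ ⊢
  omega
end
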